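/- arXiv:0901.1298 — 2 statements merged into one kernel-verified Lean document; each statement's English description precedes it below -/
import Mathlib

section
/- For every finite tree T with V vertices and all integers k, n, there is an equality of F₂-dimensions dim SH^k(T,n) = dim SH^{V−2n+k}(T, V−n). -/
open Polynomial Matrix

attribute [local instance] Classical.propDecidable

namespace Seifert

variable {V : Type} [Fintype V]

/-- A matching of a graph `G`: a finite set of edges of `G` that are pairwise disjoint. -/
def IsMatching (G : SimpleGraph V) (R : Finset (Sym2 V)) : Prop :=
  (∀ e ∈ R, e ∈ G.edgeSet) ∧
    ∀ e ∈ R, ∀ f ∈ R, e ≠ f → ∀ v : V, v ∈ e → v ∉ f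

/-- A perfect matching: a matching covering every vertex. -/
def IsPerfectMatching (G : SimpleGraph V) (R : Finset (Sym2 V)) : Prop :=
  IsMatching G R ∧ ∀ v : V, ∃ e ∈ R, v ∈ e

/-- A configuration on `G`: a matching (the set of red edges) together with an assignment
of a sign (`true` = plus, `false` = minus) to every vertex not covered by a red edge;
vertices covered by a red edge get `none`. -/
structure Config (G : SimpleGraph V) where
  red : Finset (Sym2 V)
  matching : IsMatching G red
  sign : V → Option Bool
  sign_none : ∀ v : V, sign v = none ↔ ∃ e ∈ red, v ∈ e

instance (G : SimpleGraph V) : Finite (Config G) :=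
  Finite.of_injective (fun C => (C.red, C.sign)) (by
    rintro ⟨r, hr, s, hs⟩ ⟨r', hr', s', hs'⟩ h
    simp only [Prod.mk.injEq] at h
    obtain ⟨h1, h2⟩ := h
    subst h1; subst h2; rfl)

noncomputable instance (G : SimpleGraph V) : Fintype (Config G) := Fintype.ofFinite _

/-- The grading `Q`: the number of minuses. -/
noncomputable def Qg {G : SimpleGraph V} (C : Config G) : ℕ :=
  (Finset.univ.filter fun v : V => C.sign v = some false).card

/-- The grading `E`: the number of minuses plus the number of red edges. -/
noncomputable def Eg {G : SimpleGraph V} (C : Config G) : ℕ := Qg C + C.red.card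

/-- `DStep C C'` holds iff `C'` is one of the summands of `D(C)`: it is obtained from `C`
by deleting one red edge `e` and assigning a plus to one endpoint of `e` and a minus to
the other. -/
def DStep {G : SimpleGraph V} (C C' : Config G) : Prop :=
  ∃ e ∈ C.red, C'.red = C.red.erase e ∧
    (∀ x : V, x ∉ e → C'.sign x = C.sign x) ∧
    ∃ u v : V, e = s(u, v) ∧ C'.sign u = some true ∧ C'.sign v = some false

/-- `dStep C C'` holds iff `C'` is one of the summands of `d(C)`: it is obtained from `C`
by changing the sign of one vertex from plus to minus. -/
def dStep {G : SimpleGraph V} (C C' : Config G) : Prop :=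
  C'.red = C.red ∧ ∃ w : V, C.sign w = some true ∧ C'.sign w = some false ∧
    ∀ x : V, x ≠ w → C'.sign x = C.sign x

/-- The linear map on spaces of `F₂`-valued functions induced by a relation `r`:
the basis vector of `a` is sent to the sum of the basis vectors of all `b` with `r a b`. -/
noncomputable def sumLin {α β : Type} [Fintype α] (r : α → β → Prop) :
    (α → ZMod 2) →ₗ[ZMod 2] (β → ZMod 2) where
  toFun f b := ∑ a : α, if r a b then f a else 0
  map_add' f g := by
    funext b
    simp only [Pi.add_apply]
    rw [← Finset.sum_add_distrib]
    exact Finset.sum_congr rfl fun a _ => by by_cases h : r a b <;> simp [h]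
  map_smul' c f := by
    funext b
    simp only [RingHom.id_apply, Pi.smul_apply, smul_eq_mul, Finset.mul_sum]
    exact Finset.sum_congr rfl fun a _ => by by_cases h : r a b <;> simp [h]

/-- The differential `D` on the total Seifert complex `SC(T)`. -/
noncomputable def Dmap (G : SimpleGraph V) :
    (Config G → ZMod 2) →ₗ[ZMod 2] (Config G → ZMod 2) :=
  sumLin DStep

/-- The differential `d` on the total Seifert complex `SC(T)`. -/
noncomputable def dmap (G : SimpleGraph V) :
    (Config G → ZMod 2) →ₗ[ZMod 2] (Config G → ZMod 2) :=
  sumLin dStep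

/-- The graded piece `SC^k(T,n)`: the `F₂`-vector space with basis the configurations
with `Q = k` and `E = n`. -/
abbrev SC (G : SimpleGraph V) (k n : ℤ) : Type :=
  {C : Config G // (Qg C : ℤ) = k ∧ (Eg C : ℤ) = n} → ZMod 2

/-- The differential `D` between graded pieces. (Mathematically it is nonzero only
from `SC^k(T,n)` to `SC^{k+1}(T,n)`.) -/
noncomputable def Dgr (G : SimpleGraph V) (k n k' n' : ℤ) :
    SC G k n →ₗ[ZMod 2] SC G k' n' :=
  sumLin fun C C' => DStep C.1 C'.1

/-- The dimension of the cohomology `ker g / im f` at the middle term of `A —f→ B —g→ C`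
(taking the image of `f` intersected with the kernel of `g`). -/
noncomputable def cohDim {A B M : Type} [AddCommGroup A] [AddCommGroup B] [AddCommGroup M]
    [Module (ZMod 2) A] [Module (ZMod 2) B] [Module (ZMod 2) M]
    (f : A →ₗ[ZMod 2] B) (g : B →ₗ[ZMod 2] M) : ℕ :=
  Module.finrank (ZMod 2)
    (LinearMap.ker g ⧸ (LinearMap.range f).comap (LinearMap.ker g).subtype)

/-- The dimension of the Seifert cohomology `SH^k(T,n)`. -/
noncomputable def SHdim (G : SimpleGraph V) (k n : ℤ) : ℕ :=
  cohDim (Dgr G (k - 1) n k n) (Dgr G k n (k + 1) n)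

/-- The Seifert matrix of a graph with respect to an enumeration of its vertices. -/
noncomputable def seifertMatrix (G : SimpleGraph V) {m : ℕ} (e : V ≃ Fin m) :
    Matrix (Fin m) (Fin m) ℤ := fun i j =>
  if i = j then -1 else if i < j ∧ G.Adj (e.symm i) (e.symm j) then 1 else 0

/-- The Alexander polynomial `det (t S - Sᵀ)` of a graph with respect to an enumeration
of its vertices. -/
noncomputable def alexDet (G : SimpleGraph V) {m : ℕ} (e : V ≃ Fin m) : Polynomial ℤ :=
  let S : Matrix (Fin m) (Fin m) (Polynomial ℤ) :=
    (seifertMatrix G e).map fun a => (Polynomial.C a : Polynomial ℤ)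
  ((X : Polynomial ℤ) • S - Sᵀ).det

/-- The Alexander polynomial of a graph (or forest), defined as the matching polynomial
`Σ_R t^{|R|} (1-t)^{V - 2|R|}`, the sum being over all matchings `R`. -/
noncomputable def alexMatch (G : SimpleGraph V) : Polynomial ℤ :=
  ∑ R : {R : Finset (Sym2 V) // IsMatching G R},
    X ^ R.1.card * (1 - X) ^ (Fintype.card V - 2 * R.1.card)

end Seifert

/-!
The involution reversing every sign of a configuration keeps the red edges, hence commutes
with `D`, and turns the `Q` minuses into `V - 2|R| - Q` minuses. It therefore carries the
graded piece `SC^k(T,n)` onto `SC^{V-2n+k}(T,V-n)` compatibly with `D`, and identifies the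
two cohomology groups.
-/

namespace Seifert

open Finset

lemma cohDim_congr {A B M A' B' M' : Type}
    [AddCommGroup A] [AddCommGroup B] [AddCommGroup M]
    [AddCommGroup A'] [AddCommGroup B'] [AddCommGroup M']
    [Module (ZMod 2) A] [Module (ZMod 2) B] [Module (ZMod 2) M]
    [Module (ZMod 2) A'] [Module (ZMod 2) B'] [Module (ZMod 2) M']
    {f : A →ₗ[ZMod 2] B} {g : B →ₗ[ZMod 2] M} {f' : A' →ₗ[ZMod 2] B'} {g' : B' →ₗ[ZMod 2] M'}
    (eA : A ≃ₗ[ZMod 2] A') (eB : B ≃ₗ[ZMod 2] B') (eM : M ≃ₗ[ZMod 2] M')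
    (hf : eB.toLinearMap ∘ₗ f = f' ∘ₗ eA.toLinearMap)
    (hg : eM.toLinearMap ∘ₗ g = g' ∘ₗ eB.toLinearMap) :
    cohDim f g = cohDim f' g' := by
  have hker : (LinearMap.ker g).map eB.toLinearMap = LinearMap.ker g' := by
    ext x
    have := LinearMap.congr_fun hg (eB.symm x)
    simp only [LinearMap.comp_apply, LinearEquiv.coe_coe, LinearEquiv.apply_symm_apply] at this
    rw [Submodule.mem_map_equiv, LinearMap.mem_ker, LinearMap.mem_ker, ← this,
      LinearEquiv.map_eq_zero_iff]
  have hrange : (LinearMap.range f).map eB.toLinearMap = LinearMap.range f' := by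
    rw [← LinearMap.range_comp, hf, LinearMap.range_comp_of_range_eq_top _ eA.range]
  let eKer := eB.ofSubmodules _ _ hker
  refine (Submodule.Quotient.equiv _ _ eKer ?_).finrank_eq
  ext x
  rw [Submodule.mem_map_equiv, Submodule.mem_comap, Submodule.mem_comap, ← hrange,
    Submodule.mem_map_equiv]
  rfl

lemma funCongrLeft_comp_sumLin {α β α' β' : Type} [Fintype α] [Fintype β] [Fintype α']
    [Fintype β'] {r : α → β → Prop} {r' : α' → β' → Prop} (ea : α ≃ α') (eb : β ≃ β')
    (h : ∀ a b, r' (ea a) (eb b) ↔ r a b) :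
    (LinearEquiv.funCongrLeft (ZMod 2) (ZMod 2) eb.symm).toLinearMap ∘ₗ sumLin r =
      sumLin r' ∘ₗ (LinearEquiv.funCongrLeft (ZMod 2) (ZMod 2) ea.symm).toLinearMap := by
  ext x b'
  simp only [LinearMap.comp_apply, LinearEquiv.coe_coe, LinearEquiv.funCongrLeft_apply,
    LinearMap.funLeft_apply, sumLin, LinearMap.coe_mk, AddHom.coe_mk]
  refine Fintype.sum_equiv ea _ _ fun a => ?_
  rw [← h, eb.apply_symm_apply, ea.symm_apply_apply]

namespace Config

variable {V : Type} {G : SimpleGraph V}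

theorem ext {C C' : Config G} (h_red : C.red = C'.red) (h_sign : C.sign = C'.sign) : C = C' := by
  cases C; cases C'; subst h_red h_sign; rfl

def flipSigns (C : Config G) : Config G where
  red := C.red
  matching := C.matching
  sign v := (C.sign v).map not
  sign_none v := by rw [Option.map_eq_none_iff, C.sign_none]

@[simp] lemma flipSigns_red (C : Config G) : C.flipSigns.red = C.red := rfl

@[simp] lemma flipSigns_sign (C : Config G) (v : V) :
    C.flipSigns.sign v = (C.sign v).map not := rfl

lemma flipSigns_involutive : Function.Involutive (flipSigns (G := G)) := fun C =>
  ext rfl <| funext fun v => by simp [Option.map_map, Function.comp_def]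

variable [Fintype V]

lemma card_sign_eq_none (C : Config G) : #{v | C.sign v = none} = 2 * #C.red := by
  have hcovered : ({v | C.sign v = none} : Finset V) = C.red.biUnion Sym2.toFinset := by
    ext v
    simp [C.sign_none v]
  rw [hcovered, card_biUnion, sum_const_nat fun e he =>
    Sym2.card_toFinset_of_not_isDiag e (G.not_isDiag_of_mem_edgeSet (C.matching.1 e he)),
    mul_comm]
  intro e he f hf hef
  exact disjoint_left.mpr fun v hve hvf =>
    C.matching.2 e he f hf hef v (Sym2.mem_toFinset.mp hve) (Sym2.mem_toFinset.mp hvf)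

lemma Qg_add_Qg_flipSigns (C : Config G) :
    Qg C + Qg C.flipSigns + 2 * #C.red = Fintype.card V := by
  rw [← card_sign_eq_none, Qg, Qg, card_filter, card_filter, card_filter,
    ← sum_add_distrib, ← sum_add_distrib, ← card_univ, card_eq_sum_ones]
  refine sum_congr rfl fun v _ => ?_
  rcases h : C.sign v with _ | _ | _ <;> simp [h]

end Config

open Config

section

variable {V : Type} {G : SimpleGraph V}

lemma DStep.flipSigns {C C' : Config G} (h : DStep C C') : DStep C.flipSigns C'.flipSigns := by
  obtain ⟨e, he, hred, hout, u, v, rfl, hu, hv⟩ := h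
  exact ⟨s(u, v), he, hred, fun x hx => by simp [hout x hx], v, u, Sym2.eq_swap,
    by simp [hv], by simp [hu]⟩

lemma DStep.flipSigns_iff {C C' : Config G} : DStep C.flipSigns C'.flipSigns ↔ DStep C C' :=
  ⟨fun h => by simpa [flipSigns_involutive _] using h.flipSigns, DStep.flipSigns⟩

variable [Fintype V] {k n k' n' : ℤ}

def flipSignsGraded (hk : k' = Fintype.card V - 2 * n + k) (hn : n' = Fintype.card V - n) :
    {C : Config G // (Qg C : ℤ) = k ∧ (Eg C : ℤ) = n} ≃
      {C : Config G // (Qg C : ℤ) = k' ∧ (Eg C : ℤ) = n'} :=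
  (flipSigns_involutive.toPerm _).subtypeEquiv fun C => by
    have := Qg_add_Qg_flipSigns C
    simp only [Function.Involutive.coe_toPerm, Eg, flipSigns_red]
    omega

def flipSignsSC (hk : k' = Fintype.card V - 2 * n + k) (hn : n' = Fintype.card V - n) :
    SC G k n ≃ₗ[ZMod 2] SC G k' n' :=
  LinearEquiv.funCongrLeft _ _ (flipSignsGraded hk hn).symm

lemma flipSignsSC_comp_Dgr {l l' : ℤ} (hk : k' = Fintype.card V - 2 * n + k)
    (hl : l' = Fintype.card V - 2 * n + l) (hn : n' = Fintype.card V - n) :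
    (flipSignsSC (G := G) hl hn).toLinearMap ∘ₗ Dgr G k n l n =
      Dgr G k' n' l' n' ∘ₗ (flipSignsSC hk hn).toLinearMap :=
  funCongrLeft_comp_sumLin _ _ fun _ _ => DStep.flipSigns_iff

end

variable {V : Type} [Fintype V]

theorem SHdim_duality_general (G : SimpleGraph V) (k n : ℤ) :
    SHdim G k n =
      SHdim G ((Fintype.card V : ℤ) - 2 * n + k) ((Fintype.card V : ℤ) - n) := by
  have hpred : (Fintype.card V : ℤ) - 2 * n + k - 1 = Fintype.card V - 2 * n + (k - 1) := by ring
  have hsucc : (Fintype.card V : ℤ) - 2 * n + k + 1 = Fintype.card V - 2 * n + (k + 1) := by ring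
  exact cohDim_congr (flipSignsSC hpred rfl) (flipSignsSC rfl rfl) (flipSignsSC hsucc rfl)
    (flipSignsSC_comp_Dgr _ _ _) (flipSignsSC_comp_Dgr _ _ _)

/-- the duality `dim SH^k(T,n) = dim SH^{V-2n+k}(T, V-n)`. -/
theorem SHdim_duality (G : SimpleGraph V) (hG : G.IsTree) (k n : ℤ) :
    SHdim G k n =
      SHdim G ((Fintype.card V : ℤ) - 2 * n + k) ((Fintype.card V : ℤ) - n) :=
  SHdim_duality_general G k n

end Seifert
end

section
/- Let A_n denote the path tree on n vertices with some enumeration of its vertices and Seifert matrix S. Then the Alexander polynomial of A_n equals det(tS − Sᵀ) = Σ_{k=0}^{n} (−1)^k t^k = 1 − t + t² − … + (−1)ⁿ tⁿ in ℤ[t]. -/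
open Polynomial Matrix

attribute [local instance] Classical.propDecidable

/-! Listing the vertices in path order turns `t S - Sᵀ` into a tridiagonal matrix: its diagonal
entries are `1 - t`, and each edge contributes the mirrored pair `t`, `-1` (in an order that
depends on the enumeration), whose product is `-t` either way. Expanding a tridiagonal determinant
along its first column gives the continuant recurrence `Dₙ₊₂ = (1 - t) Dₙ₊₁ + t Dₙ`, which is
solved by `Dₙ = Σ_{k ≤ n} (-t)ᵏ`. -/

namespace Matrix

variable {R : Type*} [CommRing R]

theorem det_eq_of_tridiagonal (a p : R) {f : ℕ → R} (hf0 : f 0 = 1) (hf1 : f 1 = a)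
    (hf : ∀ n, f (n + 2) = a * f (n + 1) - p * f n) :
    ∀ (n : ℕ) (M : Matrix (Fin n) (Fin n) R),
      (∀ i j : Fin n, (i : ℕ) + 1 < j ∨ (j : ℕ) + 1 < i → M i j = 0) →
      (∀ i, M i i = a) →
      (∀ i j : Fin n, (i : ℕ) + 1 = j → M i j * M j i = p) →
      M.det = f n
  | 0, M, _, _, _ => by simp [hf0]
  | 1, M, _, hdiag, _ => by simp [hf1, hdiag]
  | n + 2, M, hzero, hdiag, hoff => by
    have ih₁ := det_eq_of_tridiagonal a p hf0 hf1 hf (n + 1) (M.submatrix Fin.succ Fin.succ)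
      (fun i j h => hzero _ _ (by simpa using h)) (fun i => hdiag _)
      (fun i j h => hoff _ _ (by simpa using h))
    have ih₂ := det_eq_of_tridiagonal a p hf0 hf1 hf n
      (M.submatrix (Fin.succ ∘ Fin.succ) (Fin.succ ∘ Fin.succ))
      (fun i j h => hzero _ _ (by simp; omega)) (fun i => hdiag _)
      (fun i j h => hoff _ _ (by simp; omega))
    -- Expand along the first column: only rows 0 and 1 contribute, and the minor of row 1 has
    -- first row `(M 0 1, 0, …, 0)`.
    have hminor : (M.submatrix (Fin.succAbove 1) Fin.succ).det = M 0 1 * f n := by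
      rw [det_succ_row_zero, Fin.sum_univ_succ, Fintype.sum_eq_zero _ fun j => ?_, add_zero]
      · rw [← ih₂]
        simp [submatrix_submatrix, Function.comp_def, Fin.succAbove_of_le_castSucc, Fin.le_def]
      · simp [hzero 0 j.succ.succ (by simp)]
    rw [det_succ_column_zero, Fin.sum_univ_succ, Fin.sum_univ_succ,
      Fintype.sum_eq_zero _ fun i => ?_, add_zero]
    · rw [Fin.succAbove_zero, Fin.succ_zero_eq_one, ih₁, hminor, hdiag, hf, ← hoff 0 1 rfl,
        Fin.val_zero, Fin.val_one]
      ring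
    · simp [hzero i.succ.succ 0 (by simp)]

end Matrix

namespace Seifert

section Alexander

variable {V : Type} (G : SimpleGraph V) {m : ℕ} (e : V ≃ Fin m)

noncomputable def alexMatrix : Matrix (Fin m) (Fin m) ℤ[X] :=
  (X : ℤ[X]) • (seifertMatrix G e).map C - ((seifertMatrix G e).map C)ᵀ

theorem alexDet_eq_det_alexMatrix : alexDet G e = (alexMatrix G e).det := rfl

theorem alexMatrix_apply (u v : V) :
    alexMatrix G e (e u) (e v) =
      X * C (seifertMatrix G e (e u) (e v)) - C (seifertMatrix G e (e v) (e u)) := by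
  simp [alexMatrix, smul_eq_mul]

theorem seifertMatrix_apply (u v : V) :
    seifertMatrix G e (e u) (e v) =
      if u = v then -1 else if e u < e v ∧ G.Adj u v then 1 else 0 := by
  simp [seifertMatrix]

theorem alexMatrix_self (u : V) : alexMatrix G e (e u) (e u) = 1 - X := by
  simp [alexMatrix_apply, seifertMatrix_apply]
  ring

theorem alexMatrix_of_not_adj {u v : V} (huv : u ≠ v) (h : ¬ G.Adj u v) :
    alexMatrix G e (e u) (e v) = 0 := by
  simp [alexMatrix_apply, seifertMatrix_apply, huv, Ne.symm huv, h, G.adj_comm]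

theorem alexMatrix_mul_alexMatrix_of_adj {u v : V} (h : G.Adj u v) :
    alexMatrix G e (e u) (e v) * alexMatrix G e (e v) (e u) = -X := by
  rcases lt_or_gt_of_ne (e.injective.ne h.ne) with huv | hvu
  · simp [alexMatrix_apply, seifertMatrix_apply, h.ne, h.ne.symm, h, h.symm, huv, huv.not_gt]
  · simp [alexMatrix_apply, seifertMatrix_apply, h.ne, h.ne.symm, h, h.symm, hvu, hvu.not_gt]

end Alexander

theorem alexDet_pathGraph_general (n : ℕ) {m : ℕ} (e : Fin n ≃ Fin m) :
    alexDet (SimpleGraph.pathGraph n) e =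
      ∑ k ∈ Finset.range (n + 1), (-1 : Polynomial ℤ) ^ k * X ^ k := by
  rw [alexDet_eq_det_alexMatrix, ← det_submatrix_equiv_self e]
  refine Matrix.det_eq_of_tridiagonal (1 - X : ℤ[X]) (-X)
    (f := fun k => ∑ i ∈ Finset.range (k + 1), (-1) ^ i * X ^ i) ?_ ?_ ?_ n _ ?_ ?_ ?_
  · simp
  · simp [Finset.sum_range_succ, sub_eq_add_neg]
  · intro k
    simp only [Finset.sum_range_succ]
    ring
  · intro u v h
    exact alexMatrix_of_not_adj _ _ (fun huv => by subst huv; omega)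
      (by rw [SimpleGraph.pathGraph_adj]; omega)
  · exact alexMatrix_self _ _
  · intro u v h
    exact alexMatrix_mul_alexMatrix_of_adj _ _ (SimpleGraph.pathGraph_adj.2 (Or.inl h))

/-- the Alexander polynomial of the path on `n` vertices is
`det (t S - Sᵀ) = 1 - t + t² - ⋯ + (-1)ⁿ tⁿ`. -/
theorem alexDet_pathGraph (n : ℕ) (hn : 1 ≤ n) {m : ℕ} (e : Fin n ≃ Fin m) :
    alexDet (SimpleGraph.pathGraph n) e =
      ∑ k ∈ Finset.range (n + 1), (-1 : Polynomial ℤ) ^ k * X ^ k :=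
  alexDet_pathGraph_general n e

end Seifert
end
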